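/- arXiv:2409.01518 — 5 statements merged into one kernel-verified Lean document; each statement's English description precedes it below -/
import Mathlib

section
/- Let Q be a real capacity and let A and B be finite multisets of real numbers. Define the greedy pairing count g(A,B) recursively: if A or B is empty then g(A,B)=0; otherwise, letting a be a maximum element of A and b a minimum element of B, g(A,B) = 1 + g(A∖{a}, B∖{b}) if a + b ≤ Q, and g(A,B) = g(A∖{a}, B) otherwise. Then g(A,B) = f(A,B), i.e., the greedy algorithm that repeatedly tries to pair the largest remaining element of A with the smallest remaining element of B attains the maximum possible number of feasible pairs. -/
/-- A feasible pairing for capacity `Q` between multisets `A` and `B`: a multiset of pairs,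
each summing to at most `Q`, whose first components form a submultiset of `A` and whose
second components form a submultiset of `B`. -/
def IsFeasiblePairing (Q : ℝ) (A B : Multiset ℝ) (P : Multiset (ℝ × ℝ)) : Prop :=
  (∀ p ∈ P, p.1 + p.2 ≤ Q) ∧ P.map Prod.fst ≤ A ∧ P.map Prod.snd ≤ B

/-- `maxPairs Q A B` is the maximum cardinality of a feasible pairing. -/
noncomputable def maxPairs (Q : ℝ) (A B : Multiset ℝ) : ℕ :=
  sSup {n : ℕ | ∃ P : Multiset (ℝ × ℝ), IsFeasiblePairing Q A B P ∧ P.card = n}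

namespace GreedyAux

lemma le_erase_of_notMem {α : Type*} [DecidableEq α] {M N : Multiset α} {x : α}
    (h : M ≤ N) (hx : x ∉ M) : M ≤ N.erase x := by
  rw [Multiset.le_iff_count] at *
  intro y
  rcases eq_or_ne y x with rfl | hne
  · simp [Multiset.count_eq_zero_of_notMem hx]
  · rw [Multiset.count_erase_of_ne hne]; exact h y

lemma cons_le_erase {α : Type*} [DecidableEq α] {M N : Multiset α} {x : α}
    (h : x ::ₘ M ≤ N) : M ≤ N.erase x := by
  have := Multiset.erase_le_erase x h
  simpa using this

lemma zero_feasible (Q : ℝ) (A B : Multiset ℝ) : IsFeasiblePairing Q A B 0 := by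
  refine ⟨by simp, by simp, by simp⟩

lemma setNonempty (Q : ℝ) (A B : Multiset ℝ) :
    {n : ℕ | ∃ P : Multiset (ℝ × ℝ), IsFeasiblePairing Q A B P ∧ P.card = n}.Nonempty :=
  ⟨0, 0, zero_feasible Q A B, rfl⟩

lemma card_le_of_feasible {Q : ℝ} {A B : Multiset ℝ} {P : Multiset (ℝ × ℝ)}
    (h : IsFeasiblePairing Q A B P) : P.card ≤ A.card := by
  have := Multiset.card_le_card h.2.1
  simpa using this

lemma setBdd (Q : ℝ) (A B : Multiset ℝ) :
    BddAbove {n : ℕ | ∃ P : Multiset (ℝ × ℝ), IsFeasiblePairing Q A B P ∧ P.card = n} := by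
  refine ⟨A.card, ?_⟩
  rintro n ⟨P, hP, rfl⟩
  exact card_le_of_feasible hP

lemma le_maxPairs {Q : ℝ} {A B : Multiset ℝ} {P : Multiset (ℝ × ℝ)}
    (h : IsFeasiblePairing Q A B P) : P.card ≤ maxPairs Q A B :=
  le_csSup (setBdd Q A B) ⟨P, h, rfl⟩

lemma maxPairs_le {Q : ℝ} {A B : Multiset ℝ} {n : ℕ}
    (h : ∀ P : Multiset (ℝ × ℝ), IsFeasiblePairing Q A B P → P.card ≤ n) :
    maxPairs Q A B ≤ n := by
  apply csSup_le (setNonempty Q A B)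
  rintro m ⟨P, hP, rfl⟩
  exact h P hP

lemma exists_opt (Q : ℝ) (A B : Multiset ℝ) :
    ∃ P : Multiset (ℝ × ℝ), IsFeasiblePairing Q A B P ∧ P.card = maxPairs Q A B :=
  Nat.sSup_mem (setNonempty Q A B) (setBdd Q A B)

lemma maxPairs_zero {Q : ℝ} {A B : Multiset ℝ} (h : A = 0 ∨ B = 0) :
    maxPairs Q A B = 0 := by
  refine Nat.le_zero.mp (maxPairs_le ?_)
  intro P hP
  rcases h with rfl | rfl
  · simpa using card_le_of_feasible hP
  · have := Multiset.card_le_card hP.2.2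
    simpa using this

lemma map_erase_of_mem {α β : Type*} [DecidableEq α] [DecidableEq β]
    (f : α → β) {P : Multiset α} {p : α} (hp : p ∈ P) :
    (P.erase p).map f = (P.map f).erase (f p) := by
  conv_rhs => rw [← Multiset.cons_erase hp]
  rw [Multiset.map_cons, Multiset.erase_cons_head]

/-- Monotonicity in `A`. -/
lemma feasible_mono {Q : ℝ} {A A' B : Multiset ℝ} {P : Multiset (ℝ × ℝ)}
    (h : IsFeasiblePairing Q A' B P) (hA : A' ≤ A) : IsFeasiblePairing Q A B P :=
  ⟨h.1, le_trans h.2.1 hA, h.2.2⟩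

/-- The exchange argument. -/
lemma exchange {Q a b : ℝ} {A B : Multiset ℝ} {P : Multiset (ℝ × ℝ)}
    (ha : a ∈ A) (hamax : ∀ x ∈ A, x ≤ a) (hb : b ∈ B) (hbmin : ∀ y ∈ B, b ≤ y)
    (hP : IsFeasiblePairing Q A B P) :
    ∃ P' : Multiset (ℝ × ℝ), IsFeasiblePairing Q (A.erase a) (B.erase b) P' ∧
      P.card ≤ P'.card + 1 := by
  obtain ⟨hsum, hfst, hsnd⟩ := hP
  by_cases h1 : ∃ p ∈ P, p.1 = a
  · obtain ⟨p, hp, hpa⟩ := h1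
    by_cases h2 : ∃ q ∈ P.erase p, q.2 = b
    · obtain ⟨q, hq, hqb⟩ := h2
      set R := (P.erase p).erase q with hR
      refine ⟨(q.1, p.2) ::ₘ R, ⟨?_, ?_, ?_⟩, ?_⟩
      · intro r hr
        rcases Multiset.mem_cons.mp hr with rfl | hr
        · have hq1A : q.1 ∈ A := Multiset.mem_of_le hfst
            (Multiset.mem_map_of_mem Prod.fst (Multiset.mem_of_le (Multiset.erase_le p P) hq))
        
          have : q.1 ≤ a := hamax _ hq1A
          have hpQ : p.1 + p.2 ≤ Q := hsum p hp
          simp only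
          linarith [hpa ▸ hpQ]
        · exact hsum r (Multiset.mem_of_le (le_trans (Multiset.erase_le q _)
            (Multiset.erase_le p P)) hr)
      · -- map fst : q.1 ::ₘ R.map fst ≤ A.erase a
        have hPfst : P.map Prod.fst = a ::ₘ q.1 ::ₘ R.map Prod.fst := by
          conv_lhs => rw [← Multiset.cons_erase hp, ← Multiset.cons_erase hq]
          simp [hpa, hR]
        rw [Multiset.map_cons]
        apply cons_le_erase
        rw [hPfst] at hfst
        exact hfst
      · -- map snd : p.2 ::ₘ R.map snd ≤ B.erase b
        have hPsnd : P.map Prod.snd = b ::ₘ p.2 ::ₘ R.map Prod.snd := by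
          conv_lhs => rw [← Multiset.cons_erase hp, ← Multiset.cons_erase hq]
          simp only [Multiset.map_cons, hqb, hR]
          rw [Multiset.cons_swap]
        rw [Multiset.map_cons]
        apply cons_le_erase
        rw [hPsnd] at hsnd
        exact hsnd
      · have hcard : P.card = R.card + 2 := by
          have h1 : (P.erase p).card = R.card + 1 := by
            rw [hR, ← Multiset.card_cons, Multiset.cons_erase hq]
          have h0 : P.card = (P.erase p).card + 1 := by
            rw [← Multiset.card_cons, Multiset.cons_erase hp]
          omega
        simp [hcard]
    · -- no other pair uses b
      push_neg at h2
      refine ⟨P.erase p, ⟨?_, ?_, ?_⟩, ?_⟩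
      · intro r hr; exact hsum r (Multiset.mem_of_le (Multiset.erase_le p P) hr)
      · rw [map_erase_of_mem _ hp, hpa]
        exact Multiset.erase_le_erase a hfst
      · have hb' : b ∉ (P.erase p).map Prod.snd := by
          intro hmem
          obtain ⟨q, hq, hqb⟩ := Multiset.mem_map.mp hmem
          exact h2 q hq hqb
        refine le_erase_of_notMem ?_ hb'
        exact le_trans (Multiset.map_le_map (Multiset.erase_le p P)) hsnd
      · have : P.card = (P.erase p).card + 1 := by
          rw [← Multiset.card_cons, Multiset.cons_erase hp]
        omega
  · -- a is not used as a first component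
    push_neg at h1
    have hafst : a ∉ P.map Prod.fst := by
      intro hmem
      obtain ⟨q, hq, hqa⟩ := Multiset.mem_map.mp hmem
      exact h1 q hq hqa
    by_cases h2 : ∃ q ∈ P, q.2 = b
    · obtain ⟨q, hq, hqb⟩ := h2
      refine ⟨P.erase q, ⟨?_, ?_, ?_⟩, ?_⟩
      · intro r hr; exact hsum r (Multiset.mem_of_le (Multiset.erase_le q P) hr)
      · have hafst' : a ∉ (P.erase q).map Prod.fst := fun hm =>
          hafst (Multiset.mem_of_le (Multiset.map_le_map (Multiset.erase_le q P)) hm)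
        exact le_erase_of_notMem
          (le_trans (Multiset.map_le_map (Multiset.erase_le q P)) hfst) hafst'
      · rw [map_erase_of_mem _ hq, hqb]
        exact Multiset.erase_le_erase b hsnd
      · have : P.card = (P.erase q).card + 1 := by
          rw [← Multiset.card_cons, Multiset.cons_erase hq]
        omega
    · push_neg at h2
      have hbsnd : b ∉ P.map Prod.snd := by
        intro hmem
        obtain ⟨q, hq, hqb⟩ := Multiset.mem_map.mp hmem
        exact h2 q hq hqb
      exact ⟨P, ⟨hsum, le_erase_of_notMem hfst hafst,
        le_erase_of_notMem hsnd hbsnd⟩, by omega⟩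

lemma maxPairs_pair {Q a b : ℝ} {A B : Multiset ℝ}
    (ha : a ∈ A) (hamax : ∀ x ∈ A, x ≤ a) (hb : b ∈ B) (hbmin : ∀ y ∈ B, b ≤ y)
    (hab : a + b ≤ Q) :
    maxPairs Q A B = 1 + maxPairs Q (A.erase a) (B.erase b) := by
  apply le_antisymm
  · apply maxPairs_le
    intro P hP
    obtain ⟨P', hP', hcard⟩ := exchange ha hamax hb hbmin hP
    have := le_maxPairs hP'
    omega
  · obtain ⟨P, hP, hcard⟩ := exists_opt Q (A.erase a) (B.erase b)
    have hfeas : IsFeasiblePairing Q A B ((a, b) ::ₘ P) := by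
      refine ⟨?_, ?_, ?_⟩
      · intro r hr
        rcases Multiset.mem_cons.mp hr with rfl | hr
        · exact hab
        · exact hP.1 r hr
      · rw [Multiset.map_cons]
        calc a ::ₘ P.map Prod.fst ≤ a ::ₘ A.erase a :=
              Multiset.cons_le_cons a hP.2.1
          _ = A := Multiset.cons_erase ha
      · rw [Multiset.map_cons]
        calc b ::ₘ P.map Prod.snd ≤ b ::ₘ B.erase b :=
              Multiset.cons_le_cons b hP.2.2
          _ = B := Multiset.cons_erase hb
    have := le_maxPairs hfeas
    simp only [Multiset.card_cons, hcard] at this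
    omega

lemma maxPairs_skip {Q a b : ℝ} {A B : Multiset ℝ}
    (ha : a ∈ A) (hamax : ∀ x ∈ A, x ≤ a) (hb : b ∈ B) (hbmin : ∀ y ∈ B, b ≤ y)
    (hab : Q < a + b) :
    maxPairs Q A B = maxPairs Q (A.erase a) B := by
  apply le_antisymm
  · apply maxPairs_le
    intro P hP
    have hafst : a ∉ P.map Prod.fst := by
      intro hmem
      obtain ⟨q, hq, hqa⟩ := Multiset.mem_map.mp hmem
      have hq2B : q.2 ∈ B := Multiset.mem_of_le hP.2.2
        (Multiset.mem_map_of_mem Prod.snd hq)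
      have h1 : b ≤ q.2 := hbmin _ hq2B
      have h2 : q.1 + q.2 ≤ Q := hP.1 q hq
      rw [hqa] at h2
      linarith
    exact le_maxPairs ⟨hP.1, le_erase_of_notMem hP.2.1 hafst, hP.2.2⟩
  · obtain ⟨P, hP, hcard⟩ := exists_opt Q (A.erase a) B
    have := le_maxPairs (feasible_mono hP (Multiset.erase_le a A))
    omega

lemma exists_max_elem {A : Multiset ℝ} (h : A ≠ 0) : ∃ a ∈ A, ∀ x ∈ A, x ≤ a := by
  have hne : A.toFinset.Nonempty := by
    obtain ⟨x, hx⟩ := Multiset.exists_mem_of_ne_zero h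
    exact ⟨x, Multiset.mem_toFinset.mpr hx⟩
  obtain ⟨a, haf, hmax⟩ := A.toFinset.exists_max_image id hne
  exact ⟨a, Multiset.mem_toFinset.mp haf,
    fun x hx => hmax x (Multiset.mem_toFinset.mpr hx)⟩

lemma exists_min_elem {B : Multiset ℝ} (h : B ≠ 0) : ∃ b ∈ B, ∀ y ∈ B, b ≤ y := by
  have hne : B.toFinset.Nonempty := by
    obtain ⟨x, hx⟩ := Multiset.exists_mem_of_ne_zero h
    exact ⟨x, Multiset.mem_toFinset.mpr hx⟩
  obtain ⟨b, hbf, hmin⟩ := B.toFinset.exists_min_image id hne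
  exact ⟨b, Multiset.mem_toFinset.mp hbf,
    fun y hy => hmin y (Multiset.mem_toFinset.mpr hy)⟩

end GreedyAux

/-- The greedy pairing count (largest remaining element of `A` with smallest remaining
element of `B`) attains the maximum possible number of feasible pairs. -/
theorem greedy_pairing_optimal (Q : ℝ) (g : Multiset ℝ → Multiset ℝ → ℕ)
    (hbase : ∀ A B : Multiset ℝ, A = 0 ∨ B = 0 → g A B = 0)
    (hrec : ∀ (A B : Multiset ℝ) (a b : ℝ),
      a ∈ A → (∀ x ∈ A, x ≤ a) → b ∈ B → (∀ y ∈ B, b ≤ y) →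
      (a + b ≤ Q → g A B = 1 + g (A.erase a) (B.erase b)) ∧
      (Q < a + b → g A B = g (A.erase a) B))
    (A B : Multiset ℝ) :
    g A B = maxPairs Q A B := by
  have main : ∀ n (A B : Multiset ℝ), A.card = n → g A B = maxPairs Q A B := by
    intro n
    induction n using Nat.strong_induction_on with
    | _ n ih =>
      intro A B hA
      rcases eq_or_ne A 0 with rfl | hA0
      · rw [hbase 0 B (Or.inl rfl), GreedyAux.maxPairs_zero (Or.inl rfl)]
      rcases eq_or_ne B 0 with rfl | hB0
      · rw [hbase A 0 (Or.inr rfl), GreedyAux.maxPairs_zero (Or.inr rfl)]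
      obtain ⟨a, ha, hamax⟩ := GreedyAux.exists_max_elem hA0
      obtain ⟨b, hb, hbmin⟩ := GreedyAux.exists_min_elem hB0
      have hcardA : 0 < A.card := Multiset.card_pos.mpr hA0
      have hlt : (A.erase a).card < n := by
        rw [Multiset.card_erase_of_mem ha, Nat.pred_eq_sub_one]
        omega
      rcases le_or_gt (a + b) Q with hle | hgt
      · rw [(hrec A B a b ha hamax hb hbmin).1 hle,
          GreedyAux.maxPairs_pair ha hamax hb hbmin hle,
          ih _ hlt _ _ rfl]
      · rw [(hrec A B a b ha hamax hb hbmin).2 hgt,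
          GreedyAux.maxPairs_skip ha hamax hb hbmin hgt,
          ih _ hlt _ _ rfl]
  exact main A.card A B rfl
end

section
/- Let Q be a real capacity and let A and B be nonempty finite multisets of real numbers. Let a be a maximum element of A and b a minimum element of B. If a + b > Q, then f(A∖{a}, B) = f(A,B); that is, removing from A an element of maximum value that cannot be feasibly paired with the minimum element of B does not change the maximum number of feasible pairs. -/
/-- Removing from `A` a maximum element that cannot be feasibly paired with the minimum
element of `B` does not change the maximum number of feasible pairs. -/
theorem maxPairs_erase_max_of_infeasible (Q : ℝ) (A B : Multiset ℝ)
    (hA : A ≠ 0) (hB : B ≠ 0) (a b : ℝ)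
    (haA : a ∈ A) (hamax : ∀ x ∈ A, x ≤ a)
    (hbB : b ∈ B) (hbmin : ∀ y ∈ B, b ≤ y)
    (hinf : Q < a + b) :
    maxPairs Q (A.erase a) B = maxPairs Q A B := by
  unfold maxPairs
  congr 1
  ext n
  constructor
  · rintro ⟨P, ⟨h1, h2, h3⟩, hc⟩
    exact ⟨P, ⟨h1, h2.trans (Multiset.erase_le a A), h3⟩, hc⟩
  · rintro ⟨P, ⟨h1, h2, h3⟩, hc⟩
    refine ⟨P, ⟨h1, ?_, h3⟩, hc⟩
    have hna : a ∉ P.map Prod.fst := by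
      intro hmem
      obtain ⟨p, hp, hpa⟩ := Multiset.mem_map.mp hmem
      have hy : p.2 ∈ B := Multiset.mem_of_le h3 (Multiset.mem_map_of_mem _ hp)
      have h4 := h1 p hp
      have h5 := hbmin p.2 hy
      rw [hpa] at h4
      linarith
    rw [Multiset.le_iff_count]
    intro x
    by_cases hx : x = a
    · subst hx
      simp [Multiset.count_eq_zero_of_notMem hna]
    · rw [Multiset.count_erase_of_ne hx]
      exact Multiset.le_iff_count.mp h2 x
end

section
/- Let Q be a real capacity and let A and B be nonempty finite multisets of real numbers. Let a be a maximum element of A and b a minimum element of B. If a + b ≤ Q, then f(A,B) = f(A∖{a}, B∖{b}) + 1; that is, pairing the maximum element of A with the minimum element of B is optimal and reduces the problem to the remaining multisets. -/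
lemma maxPairs_bddAbove (Q : ℝ) (A B : Multiset ℝ) :
    BddAbove {n : ℕ | ∃ P : Multiset (ℝ × ℝ), IsFeasiblePairing Q A B P ∧ P.card = n} := by
  refine ⟨A.card, ?_⟩
  rintro n ⟨P, hP, rfl⟩
  have := Multiset.card_le_card hP.2.1
  simpa using this

lemma le_maxPairs {Q : ℝ} {A B : Multiset ℝ} {P : Multiset (ℝ × ℝ)}
    (h : IsFeasiblePairing Q A B P) : P.card ≤ maxPairs Q A B :=
  le_csSup (maxPairs_bddAbove Q A B) ⟨P, h, rfl⟩

lemma exists_optimal (Q : ℝ) (A B : Multiset ℝ) :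
    ∃ P : Multiset (ℝ × ℝ), IsFeasiblePairing Q A B P ∧ P.card = maxPairs Q A B := by
  have hne : {n : ℕ | ∃ P : Multiset (ℝ × ℝ), IsFeasiblePairing Q A B P ∧ P.card = n}.Nonempty :=
    ⟨0, 0, ⟨by simp, by simp, by simp⟩, rfl⟩
  exact Nat.sSup_mem hne (maxPairs_bddAbove Q A B)

lemma le_erase_of_notMem {α : Type*} [DecidableEq α] {s t : Multiset α} {x : α}
    (h : s ≤ t) (hx : x ∉ s) : s ≤ t.erase x := by
  rw [Multiset.le_iff_count] at h ⊢
  intro y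
  by_cases hy : y = x
  · subst hy
    simp [Multiset.count_eq_zero_of_notMem hx]
  · rw [Multiset.count_erase_of_ne hy]
    exact h y

lemma cons_le_imp {α : Type*} [DecidableEq α] {s t : Multiset α} {x : α}
    (h : x ::ₘ s ≤ t) : s ≤ t.erase x := by
  have := Multiset.erase_le_erase x h
  simpa using this

lemma exchange (Q : ℝ) (A B : Multiset ℝ) (a b : ℝ)
    (hamax : ∀ x ∈ A, x ≤ a)
    (P : Multiset (ℝ × ℝ)) (hP : IsFeasiblePairing Q A B P) (hc : 1 ≤ P.card) :
    ∃ P', IsFeasiblePairing Q (A.erase a) (B.erase b) P' ∧ P.card ≤ P'.card + 1 := by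
  obtain ⟨hQ, hfst, hsnd⟩ := hP
  by_cases ha : a ∈ P.map Prod.fst
  · obtain ⟨p, hpP, hpa⟩ := Multiset.mem_map.1 ha
    have hPp : P = p ::ₘ P.erase p := (Multiset.cons_erase hpP).symm
    have hfst' : (P.erase p).map Prod.fst ≤ A.erase a := by
      apply cons_le_imp
      rw [← hpa, ← Multiset.map_cons, ← hPp]; exact hfst
    by_cases hb : b ∈ (P.erase p).map Prod.snd
    · obtain ⟨q, hqP, hqb⟩ := Multiset.mem_map.1 hb
      refine ⟨(q.1, p.2) ::ₘ (P.erase p).erase q, ⟨?_, ?_, ?_⟩, ?_⟩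
      · intro r hr
        rcases Multiset.mem_cons.1 hr with h | h
        · subst h
          have hq1 : q.1 ∈ A.erase a :=
            Multiset.mem_of_le hfst' (Multiset.mem_map_of_mem _ hqP)
          have hq1A : q.1 ∈ A := Multiset.mem_of_mem_erase hq1
          have h1 : q.1 ≤ a := hamax _ hq1A
          have h2 : a + p.2 ≤ Q := by
            have := hQ p hpP
            rwa [hpa] at this
          simp only
          linarith
        · exact hQ r (Multiset.mem_of_le
            (le_trans (Multiset.erase_le q _) (Multiset.erase_le p P)) h)
      · have hmap : (P.erase p).map Prod.fst
            = q.1 ::ₘ ((P.erase p).erase q).map Prod.fst := by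
          conv_lhs => rw [← Multiset.cons_erase hqP]
          rw [Multiset.map_cons]
        rw [Multiset.map_cons]
        simp only
        rw [← hmap]
        exact hfst'
      · have h1 : P.map Prod.snd = p.2 ::ₘ b ::ₘ ((P.erase p).erase q).map Prod.snd := by
          conv_lhs => rw [hPp]
          rw [Multiset.map_cons]
          congr 1
          conv_lhs => rw [← Multiset.cons_erase hqP]
          rw [Multiset.map_cons, hqb]
        have h2 : b ::ₘ p.2 ::ₘ ((P.erase p).erase q).map Prod.snd ≤ B := by
          rw [Multiset.cons_swap, ← h1]; exact hsnd
        have h3 := cons_le_imp h2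
        rw [Multiset.map_cons]
        simpa using h3
      · have c1 := Multiset.card_erase_of_mem hpP
        have c2 := Multiset.card_erase_of_mem hqP
        have c3 : 0 < (P.erase p).card := Multiset.card_pos_iff_exists_mem.2 ⟨q, hqP⟩
        simp only [Nat.pred_eq_sub_one] at c1 c2
        rw [Multiset.card_cons]
        omega
    · refine ⟨P.erase p, ⟨?_, hfst', ?_⟩, ?_⟩
      · intro r hr; exact hQ r (Multiset.mem_of_le (Multiset.erase_le p P) hr)
      · exact le_erase_of_notMem
          (le_trans (Multiset.map_le_map (Multiset.erase_le p P)) hsnd) hb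
      · rw [Multiset.card_erase_of_mem hpP, Nat.pred_eq_sub_one]; omega
  · by_cases hb : b ∈ P.map Prod.snd
    · obtain ⟨q, hqP, hqb⟩ := Multiset.mem_map.1 hb
      refine ⟨P.erase q, ⟨?_, ?_, ?_⟩, ?_⟩
      · intro r hr; exact hQ r (Multiset.mem_of_le (Multiset.erase_le q P) hr)
      · exact le_erase_of_notMem
          (le_trans (Multiset.map_le_map (Multiset.erase_le q P)) hfst)
          (fun h => ha (Multiset.mem_of_le (Multiset.map_le_map (Multiset.erase_le q P)) h))
      · apply cons_le_imp
        rw [← hqb, ← Multiset.map_cons, Multiset.cons_erase hqP]; exact hsnd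
      · rw [Multiset.card_erase_of_mem hqP, Nat.pred_eq_sub_one]; omega
    · obtain ⟨p, hpP⟩ := Multiset.card_pos_iff_exists_mem.1 hc
      refine ⟨P.erase p, ⟨?_, ?_, ?_⟩, ?_⟩
      · intro r hr; exact hQ r (Multiset.mem_of_le (Multiset.erase_le p P) hr)
      · exact le_erase_of_notMem
          (le_trans (Multiset.map_le_map (Multiset.erase_le p P)) hfst)
          (fun h => ha (Multiset.mem_of_le (Multiset.map_le_map (Multiset.erase_le p P)) h))
      · exact le_erase_of_notMem
          (le_trans (Multiset.map_le_map (Multiset.erase_le p P)) hsnd)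
          (fun h => hb (Multiset.mem_of_le (Multiset.map_le_map (Multiset.erase_le p P)) h))
      · rw [Multiset.card_erase_of_mem hpP, Nat.pred_eq_sub_one]; omega

/-- If the maximum element of `A` and the minimum element of `B` can be feasibly paired,
then pairing them is optimal: it reduces the problem to the remaining multisets. -/
theorem maxPairs_pair_max_min_of_feasible (Q : ℝ) (A B : Multiset ℝ)
    (hA : A ≠ 0) (hB : B ≠ 0) (a b : ℝ)
    (haA : a ∈ A) (hamax : ∀ x ∈ A, x ≤ a)
    (hbB : b ∈ B) (hbmin : ∀ y ∈ B, b ≤ y)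
    (hfeas : a + b ≤ Q) :
    maxPairs Q A B = maxPairs Q (A.erase a) (B.erase b) + 1 := by
  have hsingle : IsFeasiblePairing Q A B {(a, b)} := by
    refine ⟨?_, ?_, ?_⟩
    · intro p hp
      rw [Multiset.mem_singleton] at hp
      subst hp; exact hfeas
    · simpa using Multiset.singleton_le.2 haA
    · simpa using Multiset.singleton_le.2 hbB
  -- ≥ direction
  have h1 : maxPairs Q (A.erase a) (B.erase b) + 1 ≤ maxPairs Q A B := by
    obtain ⟨P', hP', hc'⟩ := exists_optimal Q (A.erase a) (B.erase b)
    have hfeasP : IsFeasiblePairing Q A B ((a, b) ::ₘ P') := by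
      obtain ⟨hQ', hfst', hsnd'⟩ := hP'
      refine ⟨?_, ?_, ?_⟩
      · intro p hp
        rcases Multiset.mem_cons.1 hp with h | h
        · subst h; exact hfeas
        · exact hQ' p h
      · rw [Multiset.map_cons]
        calc (a, b).1 ::ₘ P'.map Prod.fst ≤ a ::ₘ A.erase a :=
              Multiset.cons_le_cons _ hfst'
          _ = A := Multiset.cons_erase haA
      · rw [Multiset.map_cons]
        calc (a, b).2 ::ₘ P'.map Prod.snd ≤ b ::ₘ B.erase b :=
              Multiset.cons_le_cons _ hsnd'
          _ = B := Multiset.cons_erase hbB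
    have := le_maxPairs hfeasP
    rw [Multiset.card_cons, hc'] at this
    omega
  -- ≤ direction
  have h2 : maxPairs Q A B ≤ maxPairs Q (A.erase a) (B.erase b) + 1 := by
    obtain ⟨P, hP, hc⟩ := exists_optimal Q A B
    have hge1 : 1 ≤ maxPairs Q A B := by
      have := le_maxPairs hsingle
      simpa using this
    obtain ⟨P', hP', hle⟩ := exchange Q A B a b hamax P hP (by omega)
    have := le_maxPairs hP'
    omega
  omega
end

section
/- Let X be a pseudometric space, o ∈ X a depot, N a finite set of customers in X, q : X → ℝ a nonnegative demand function, Q a real capacity, and K a natural number of vehicles. Suppose each vehicle k (for k in Fin K) has a route r_k given by a list of points of X whose first and last elements are o, and suppose there is an assignment σ : N → Fin K such that every customer i ∈ N occurs in the list r_{σ(i)}, and for each vehicle k the total demand Σ_{i ∈ N, σ(i)=k} q(i) is at most Q. Then there exist routes r'_k (lists of points of X with first and last elements o) such that: every customer of N occurs in exactly one route r'_k and occurs there exactly once; all non-depot entries of each r'_k are customers in N; for each k the total demand of the customers on r'_k is at most Q; and Σ_k len(r'_k) ≤ Σ_k len(r_k), where len denotes the polyline length. (This shows that a feasible VRP solution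 of no greater total length can be extracted from the route decomposition of any feasible MVRP solution.) -/
/-- The polyline length of a list of points `v₀, v₁, …, v_m` in a pseudometric space:
the sum `Σ_{t=1}^{m} dist (v_{t-1}) (v_t)`. Lists with at most one element have length 0. -/
def polylineLength {X : Type*} [PseudoMetricSpace X] (p : List X) : ℝ :=
  (p.zipWith dist p.tail).sum

set_option linter.unusedSectionVars false

section Aux

variable {X : Type*} [PseudoMetricSpace X]

lemma polylineLength_cons_cons (a c : X) (t : List X) :
    polylineLength (a :: c :: t) = dist a c + polylineLength (c :: t) := rfl

lemma polylineLength_head_le (l : List X) (a x : X) :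
    polylineLength (a :: l) ≤ dist a x + polylineLength (x :: l) := by
  cases l with
  | nil => simpa [polylineLength] using dist_nonneg (x := a) (y := x)
  | cons c t =>
    rw [polylineLength_cons_cons, polylineLength_cons_cons]
    have := dist_triangle a x c
    linarith

lemma polylineLength_sublist {s p : List X} (h : s.Sublist p) :
    ∀ a b : X, polylineLength (a :: (s ++ [b])) ≤ polylineLength (a :: (p ++ [b])) := by
  induction h with
  | slnil => intro a b; exact le_refl _
  | @cons l₁ l₂ x h ih =>
    intro a b
    calc polylineLength (a :: (l₁ ++ [b]))
        ≤ dist a x + polylineLength (x :: (l₁ ++ [b])) := polylineLength_head_le _ _ _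
      _ ≤ dist a x + polylineLength (x :: (l₂ ++ [b])) := by linarith [ih x b]
      _ = polylineLength (a :: ((x :: l₂) ++ [b])) := by
          rw [List.cons_append, polylineLength_cons_cons]
  | cons_cons x h ih =>
    intro a b
    simp only [List.cons_append, polylineLength_cons_cons]
    linarith [ih x b]

/-- A list with head `o` and last `o` is `[o]` or `o :: m ++ [o]`. -/
lemma eq_single_or_middle {l : List X} {o : X}
    (h1 : l.head? = some o) (h2 : l.getLast? = some o) :
    l = [o] ∨ ∃ m, l = o :: (m ++ [o]) := by
  cases l with
  | nil => simp at h1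
  | cons a t =>
    simp only [List.head?_cons, Option.some.injEq] at h1
    subst h1
    cases t.eq_nil_or_concat with
    | inl h => left; simp [h]
    | inr h =>
      obtain ⟨m, b, rfl⟩ := h
      right
      have he : (a :: m.concat b) = (a :: m) ++ [b] := by
        simp [List.concat_eq_append]
      rw [he, List.getLast?_concat] at h2
      have hb : b = a := by simpa using h2
      exact ⟨m, by simp [List.concat_eq_append, hb]⟩

end Aux

open scoped Classical in
/-- From the route decomposition of any feasible MVRP solution (routes `r k` starting and
ending at the depot `o`, an assignment `σ` of customers to vehicles respecting capacity),
one can extract a feasible VRP solution `r'` — each customer of `N` visited exactly once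
across all routes, all non-depot entries being customers, capacities respected — whose
total polyline length is no greater. -/
theorem exists_feasible_vrp_of_mvrp_routes {X : Type*} [PseudoMetricSpace X]
    (o : X) (N : Finset X) (hoN : o ∉ N) (q : X → ℝ) (hq : ∀ i ∈ N, 0 ≤ q i)
    (Q : ℝ) (K : ℕ) (r : Fin K → List X)
    (hstart : ∀ k, (r k).head? = some o) (hend : ∀ k, (r k).getLast? = some o)
    (σ : X → Fin K) (hσ : ∀ i ∈ N, i ∈ r (σ i))
    (hcap : ∀ k : Fin K, ∑ i ∈ N.filter (fun i => σ i = k), q i ≤ Q) :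
    ∃ r' : Fin K → List X,
      (∀ k, (r' k).head? = some o) ∧ (∀ k, (r' k).getLast? = some o) ∧
      (∀ i ∈ N, ∑ k : Fin K, (r' k).count i = 1) ∧
      (∀ k, ∀ x ∈ r' k, x = o ∨ x ∈ N) ∧
      (∀ k : Fin K, ∑ i ∈ N.filter (fun i => i ∈ r' k), q i ≤ Q) ∧
      ∑ k : Fin K, polylineLength (r' k) ≤ ∑ k : Fin K, polylineLength (r k) := by
  set P : Fin K → X → Bool := fun k x => decide (x ∈ N ∧ σ x = k) with hP
  set s : Fin K → List X := fun k => ((r k).filter (P k)).dedup with hs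
  have hmem : ∀ k x, x ∈ s k ↔ x ∈ N ∧ σ x = k ∧ x ∈ r k := by
    intro k x
    simp only [hs, List.mem_dedup, List.mem_filter, hP, decide_eq_true_eq]
    tauto
  have hnd : ∀ k, (s k).Nodup := fun k => List.nodup_dedup _
  have hoP : ∀ k, P k o = false := by
    intro k; simp [hP, hoN]
  refine ⟨fun k => o :: (s k ++ [o]), ?_, ?_, ?_, ?_, ?_, ?_⟩
  · intro k; rfl
  · intro k
    show (o :: (s k ++ [o])).getLast? = some o
    rw [show o :: (s k ++ [o]) = (o :: s k) ++ [o] from rfl, List.getLast?_concat]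
  · -- counts
    intro i hi
    have hio : i ≠ o := fun h => hoN (h ▸ hi)
    have hcount : ∀ k, (o :: (s k ++ [o])).count i = if σ i = k then 1 else 0 := by
      intro k
      rw [List.count_cons, List.count_append, List.count_singleton']
      simp only [hio, if_neg, if_neg (fun h : o = i => hio h.symm)]
      by_cases h : σ i = k
      · have : i ∈ s k := (hmem k i).2 ⟨hi, h, h ▸ hσ i hi⟩
        rw [List.count_eq_one_of_mem (hnd k) this]
        simp [h, hio, Ne.symm hio]
      · have : i ∉ s k := fun hmem' => h ((hmem k i).1 hmem').2.1
        rw [List.count_eq_zero_of_not_mem this]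
        simp [h, Ne.symm hio]
    simp only [hcount]
    simp
  · intro k x hx
    simp only [List.mem_cons, List.mem_append, List.mem_singleton, List.not_mem_nil,
      or_false] at hx
    rcases hx with h | h | h
    · exact Or.inl h
    · exact Or.inr ((hmem k x).1 h).1
    · exact Or.inl h
  · intro k
    refine le_trans (Finset.sum_le_sum_of_subset_of_nonneg ?_ ?_) (hcap k)
    · intro i hi
      simp only [Finset.mem_filter] at hi ⊢
      obtain ⟨hiN, hir⟩ := hi
      refine ⟨hiN, ?_⟩
      simp only [List.mem_cons, List.mem_append, List.mem_singleton, List.not_mem_nil,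
        or_false] at hir
      rcases hir with h | h | h
      · exact absurd (h ▸ hiN) hoN
      · exact ((hmem k i).1 h).2.1
      · exact absurd (h ▸ hiN) hoN
    · intro i hi _
      exact hq i (Finset.mem_filter.1 hi).1
  · refine Finset.sum_le_sum fun k _ => ?_
    show polylineLength (o :: (s k ++ [o])) ≤ polylineLength (r k)
    rcases eq_single_or_middle (hstart k) (hend k) with h | ⟨m, h⟩
    · have hsk : s k = [] := by
        have : (r k).filter (P k) = [] := by
          rw [h]; simp [List.filter, hoP k]
        simp [hs, this]
      rw [hsk, h]
      simp [polylineLength]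
    · have hsub : (s k).Sublist m := by
        have h1 : (r k).filter (P k) = m.filter (P k) := by
          rw [h]
          simp [List.filter_cons, List.filter_append, hoP k]
        have h2 : (s k).Sublist (m.filter (P k)) := by
          rw [hs]; dsimp only; rw [h1]; exact List.dedup_sublist _
        exact h2.trans List.filter_sublist
      rw [h]
      exact polylineLength_sublist hsub o o
end

section
/- Let X be a pseudometric space, o ∈ X a depot, N a finite set of customers in X, q : X → ℝ a nonnegative demand function, Q a real capacity, K a number of vehicles, L ≥ 1 a natural number (maximum platoon size), and η a real number with 0 ≤ η and η(L−1) ≤ 1. Suppose we are given: (i) vehicle routes r_k (lists of points of X starting and ending at o, for k in Fin K) together with an assignment σ : N → Fin K such that every customer i occurs in r_{σ(i)} and each vehicle's assigned total demand is at most Q; and (ii) a finite family of platoon traversals indexed by j ∈ J, each consisting of a multiplicity l_j (a natural number with 1 ≤ l_j ≤ L) and an arc length d_j ≥ 0, such that the total vehicle-distance matches: Σ_{j∈J} l_j d_j = Σ_k len(r_k). Let C = Σ_{j∈J} d_j · l_j · (1 − η(l_j − 1)) be the MVRP cost of this solution. Then there exists a feasible VRP solution, i.e., routes r'_k starting and ending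 at o in which every customer of N appears exactly once across all routes and each route's total customer demand is at most Q, such that (1 − η(L−1)) · Σ_k len(r'_k) ≤ C. (This is the left inequality of Theorem 1: the optimal MVRP cost is at least c_min/c_max times the optimal VRP cost, where c_min = 1 − η(L−1) and c_max = 1.) -/
section Helpers

variable {X : Type*} [PseudoMetricSpace X]

@[simp] lemma pll_nil : polylineLength ([] : List X) = 0 := rfl
@[simp] lemma pll_single (a : X) : polylineLength [a] = 0 := rfl
lemma pll_cons_cons (a b : X) (t : List X) :
    polylineLength (a :: b :: t) = dist a b + polylineLength (b :: t) := by
  simp [polylineLength]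

lemma pll_nonneg : ∀ p : List X, 0 ≤ polylineLength p
  | [] => le_refl 0
  | [_] => le_refl 0
  | a :: b :: t => by
      rw [pll_cons_cons]
      exact add_nonneg dist_nonneg (pll_nonneg (b :: t))

lemma pll_le_cons (b : X) (p : List X) : polylineLength p ≤ polylineLength (b :: p) := by
  cases p with
  | nil => simp
  | cons c t => rw [pll_cons_cons]; linarith [dist_nonneg (x := b) (y := c)]

lemma pll_cons_le_cons_cons (a b : X) (p : List X) :
    polylineLength (a :: p) ≤ polylineLength (a :: b :: p) := by
  cases p with
  | nil => rw [pll_cons_cons]; simp [dist_nonneg]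
  | cons c t =>
      rw [pll_cons_cons, pll_cons_cons, pll_cons_cons]
      linarith [dist_triangle a b c]

lemma pll_mono_cons {l₁ l₂ : List X} (h : l₁.Sublist l₂) :
    ∀ a, polylineLength (a :: l₁) ≤ polylineLength (a :: l₂) := by
  induction h with
  | slnil => intro a; exact le_refl _
  | cons b h ih =>
      intro a
      exact (ih a).trans (pll_cons_le_cons_cons a b _)
  | cons_cons b h ih =>
      intro a
      rw [pll_cons_cons, pll_cons_cons]
      exact add_le_add_right (ih b) _

lemma pll_mono {l₁ l₂ : List X} (h : l₁.Sublist l₂) :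
    polylineLength l₁ ≤ polylineLength l₂ := by
  induction h with
  | slnil => exact le_refl _
  | cons b h ih => exact ih.trans (pll_le_cons b _)
  | cons_cons b h _ => exact pll_mono_cons h b

lemma sublist_of_cons_of_not_mem {α : Type*} {a : α} {s m : List α}
    (h : s.Sublist (a :: m)) (ha : a ∉ s) : s.Sublist m := by
  cases s with
  | nil => exact List.nil_sublist m
  | cons x t =>
      rcases List.cons_sublist_cons'.mp h with h' | ⟨rfl, _⟩
      · exact h'
      · exact absurd List.mem_cons_self ha

lemma sublist_of_append_singleton_of_not_mem {α : Type*} {a : α} {s m : List α}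
    (h : s.Sublist (m ++ [a])) (ha : a ∉ s) : s.Sublist m := by
  have h1 : s.reverse.Sublist (a :: m.reverse) := by
    simpa using h.reverse
  have h2 := sublist_of_cons_of_not_mem h1 (by simpa using ha)
  simpa using h2.reverse

end Helpers

open scoped Classical in
/-- Left inequality of Theorem 1: given a feasible MVRP solution with vehicle routes `r`,
customer assignment `σ`, and platoon traversals `(l j, d j)` whose total vehicle-distance
matches `Σ_k len (r k)`, there is a feasible VRP solution `r'` with
`(1 - η (L - 1)) · Σ_k len (r' k) ≤ C`, where `C` is the MVRP cost
`Σ_j d j · l j · (1 - η (l j - 1))`. -/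
theorem mvrp_cost_ge_cmin_mul_vrp_length {X : Type*} [PseudoMetricSpace X]
    (o : X) (N : Finset X) (hoN : o ∉ N) (q : X → ℝ) (hq : ∀ i ∈ N, 0 ≤ q i)
    (Q : ℝ) (K : ℕ) (L : ℕ) (hL : 1 ≤ L) (η : ℝ) (hη : 0 ≤ η)
    (hηL : η * ((L : ℝ) - 1) ≤ 1)
    (r : Fin K → List X)
    (hstart : ∀ k, (r k).head? = some o) (hend : ∀ k, (r k).getLast? = some o)
    (σ : X → Fin K) (hσ : ∀ i ∈ N, i ∈ r (σ i))
    (hcap : ∀ k : Fin K, ∑ i ∈ N.filter (fun i => σ i = k), q i ≤ Q)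
    {J : Type*} [Fintype J] (l : J → ℕ) (d : J → ℝ)
    (hl : ∀ j, 1 ≤ l j ∧ l j ≤ L) (hd : ∀ j, 0 ≤ d j)
    (htot : ∑ j : J, (l j : ℝ) * d j = ∑ k : Fin K, polylineLength (r k)) :
    ∃ r' : Fin K → List X,
      (∀ k, (r' k).head? = some o) ∧ (∀ k, (r' k).getLast? = some o) ∧
      (∀ i ∈ N, ∑ k : Fin K, (r' k).count i = 1) ∧
      (∀ k : Fin K, ∑ i ∈ N.filter (fun i => i ∈ r' k), q i ≤ Q) ∧
      (1 - η * ((L : ℝ) - 1)) * ∑ k : Fin K, polylineLength (r' k) ≤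
        ∑ j : J, d j * (l j : ℝ) * (1 - η * ((l j : ℝ) - 1)) := by
  classical
  -- the selected customers for vehicle k, each exactly once
  set s : Fin K → List X :=
    fun k => ((r k).dedup).filter (fun x => x ∈ N ∧ σ x = k) with hs
  have hmem : ∀ k x, x ∈ s k ↔ x ∈ r k ∧ x ∈ N ∧ σ x = k := by
    intro k x
    simp [hs, List.mem_filter, List.mem_dedup]
  have hnodup : ∀ k, (s k).Nodup := fun k => (List.nodup_dedup _).filter _
  have hnoto : ∀ k, o ∉ s k := by
    intro k h
    exact hoN ((hmem k o).mp h).2.1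
  refine ⟨fun k => o :: s k ++ [o], ?_, ?_, ?_, ?_, ?_⟩
  · intro k; rfl
  · intro k
    rw [List.getLast?_append_of_ne_nil _ (by simp)]
    rfl
  · -- each customer counted exactly once
    intro i hi
    have hio : i ≠ o := fun h => hoN (h ▸ hi)
    have hcount : ∀ k : Fin K, (o :: s k ++ [o]).count i = if k = σ i then 1 else 0 := by
      intro k
      have : (o :: s k ++ [o]).count i = (s k).count i := by
        simp [List.count_cons, List.count_append, hio, hio.symm]
      rw [this]
      by_cases hk : k = σ i
      · subst hk
        rw [if_pos rfl]
        exact List.count_eq_one_of_mem (hnodup _) ((hmem _ i).mpr ⟨hσ i hi, hi, rfl⟩)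
      · rw [if_neg hk, List.count_eq_zero_of_not_mem]
        intro h
        exact hk (((hmem k i).mp h).2.2.symm ▸ rfl)
    simp only [hcount]
    simp
  · -- capacity
    intro k
    refine le_trans ?_ (hcap k)
    apply Finset.sum_le_sum_of_subset_of_nonneg
    · intro i hi
      rw [Finset.mem_filter] at hi ⊢
      refine ⟨hi.1, ?_⟩
      have hio : i ≠ o := fun h => hoN (h ▸ hi.1)
      have : i ∈ s k := by
        have := hi.2
        simp only [List.mem_cons, List.mem_append, List.mem_singleton] at this
        tauto
      exact ((hmem k i).mp this).2.2
    · intro i hi _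
      exact hq i (Finset.mem_filter.mp hi).1
  · -- cost bound
    have hlen : ∀ k, polylineLength (o :: s k ++ [o]) ≤ polylineLength (r k) := by
      intro k
      obtain ⟨t, ht⟩ : ∃ t, r k = o :: t := by
        have h := hstart k
        cases hrk : r k with
        | nil => rw [hrk] at h; simp at h
        | cons a t =>
            rw [hrk] at h
            simp only [List.head?_cons, Option.some.injEq] at h
            exact ⟨t, by rw [h]⟩
      have hsub : (s k).Sublist (r k) :=
        ((List.filter_sublist).trans (List.dedup_sublist _))
      have hsub' : (s k).Sublist t := sublist_of_cons_of_not_mem (ht ▸ hsub) (hnoto k)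
      cases t with
      | nil =>
          have : s k = [] := List.sublist_nil.mp hsub'
          rw [this]
          have h0 : polylineLength (o :: ([] : List X) ++ [o]) = 0 := by
            simp [polylineLength]
          rw [h0]
          exact pll_nonneg (r k)
      | cons b u =>
          have hlast : (b :: u).getLast? = some o := by
            have h := hend k
            rw [ht, List.getLast?_cons_cons] at h
            exact h
          have hdecomp : (b :: u).dropLast ++ [o] = b :: u :=
            List.dropLast_append_getLast? o hlast
          have hsubd : (s k).Sublist ((b :: u).dropLast ++ [o]) := by
            rw [hdecomp]; exact hsub'
          have hsub'' : (s k).Sublist ((b :: u).dropLast) :=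
            sublist_of_append_singleton_of_not_mem hsubd (hnoto k)
          have : (o :: s k ++ [o]).Sublist (o :: (b :: u).dropLast ++ [o]) :=
            List.Sublist.append (hsub''.cons₂ o) (List.Sublist.refl _)
          have h2 : (o :: (b :: u).dropLast ++ [o]) = r k := by
            rw [ht, List.cons_append, hdecomp]
          exact h2 ▸ pll_mono this
    have hsum : ∑ k : Fin K, polylineLength (o :: s k ++ [o]) ≤
        ∑ j : J, (l j : ℝ) * d j := by
      rw [htot]
      exact Finset.sum_le_sum fun k _ => hlen k
    have hcmin : 0 ≤ 1 - η * ((L : ℝ) - 1) := by linarith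
    calc (1 - η * ((L : ℝ) - 1)) * ∑ k : Fin K, polylineLength (o :: s k ++ [o])
        ≤ (1 - η * ((L : ℝ) - 1)) * ∑ j : J, (l j : ℝ) * d j :=
          mul_le_mul_of_nonneg_left hsum hcmin
      _ = ∑ j : J, (1 - η * ((L : ℝ) - 1)) * ((l j : ℝ) * d j) := Finset.mul_sum _ _ _
      _ ≤ ∑ j : J, d j * (l j : ℝ) * (1 - η * ((l j : ℝ) - 1)) := by
          apply Finset.sum_le_sum
          intro j _
          have h1 : (l j : ℝ) ≤ L := Nat.cast_le.mpr (hl j).2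
          have h2 : (1 : ℝ) ≤ l j := by exact_mod_cast (hl j).1
          have hd' := hd j
          nlinarith [mul_nonneg (mul_nonneg (mul_nonneg hd'
            (le_trans zero_le_one h2)) hη) (sub_nonneg.mpr h1)]
end
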